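/- arXiv:2401.04332 — 5 statements merged into one kernel-verified Lean document; each statement's English description precedes it below -/
import Mathlib

section
/- Let X be a set, let φ₁, φ₂ : X → ℝ be bounded functions, let g : X → X be a bijection, and let F¹,…,Fⁿ be operators mapping bounded real-valued functions on X to bounded real-valued functions on X, each of which is non-expansive and equivariant with respect to g. Set ε = sup_{x∈X} |φ₁(x) − φ₂(g(x))| (which is finite). Then for every a ∈ ℝⁿ and every x ∈ X: if Fⁱ(φ₁)(x) ≤ a_i for all i, then Fⁱ(φ₂)(g(x)) ≤ a_i + ε for all i; and if Fⁱ(φ₂)(g(x)) ≤ a_i for all i, then Fⁱ(φ₁)(x) ≤ a_i + ε for all i. Equivalently, writing Γ_k = (F¹(φ_k),…,Fⁿ(φ_k)) : X → ℝⁿ for k = 1,2, the map g sends S(Γ₁)_a into S(Γ₂)_{a+ε𝟏} and g⁻¹ sends S(Γ₂)_a into S(Γ₁)_{a+ε𝟏}; i.e., the two multi-GENEO sublevel set filtrations are ε-interleaved via g, with ε = sup_x |φ₁(x) − (φ₂∘g)(x)|. -/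
/-- A real-valued function is bounded. -/
def IsBoundedFun {X : Type*} (φ : X → ℝ) : Prop := ∃ C : ℝ, ∀ x, |φ x| ≤ C

/-- An operator on functions is non-expansive with respect to the sup pseudometric
on bounded functions. -/
def NonExpansiveOp {X Y : Type*} (F : (X → ℝ) → (Y → ℝ)) : Prop :=
  ∀ φ ψ : X → ℝ, IsBoundedFun φ → IsBoundedFun ψ →
    (⨆ y, |F φ y - F ψ y|) ≤ ⨆ x, |φ x - ψ x|

/-- An operator is equivariant with respect to `g` if `F (φ ∘ g) = F φ ∘ g`
for every bounded `φ`. -/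
def EquivariantOp {X : Type*} (F : (X → ℝ) → (X → ℝ)) (g : X → X) : Prop :=
  ∀ φ : X → ℝ, IsBoundedFun φ → F (fun x => φ (g x)) = fun x => F φ (g x)

/-- Two multi-GENEO sublevel set filtrations built from `ε`-close bounded functions
are `ε`-interleaved via the bijection `g`, where `ε = sup_x |φ₁ x − φ₂ (g x)|`. -/
theorem multiGENEO_interleaved
    {X : Type*} {n : ℕ} (φ₁ φ₂ : X → ℝ)
    (hφ₁ : IsBoundedFun φ₁) (hφ₂ : IsBoundedFun φ₂)
    (g : X ≃ X)
    (F : Fin n → (X → ℝ) → (X → ℝ))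
    (hBdd : ∀ i (φ : X → ℝ), IsBoundedFun φ → IsBoundedFun (F i φ))
    (hNE : ∀ i, NonExpansiveOp (F i))
    (hEqv : ∀ i, EquivariantOp (F i) g)
    (ε : ℝ) (hε : ε = ⨆ x, |φ₁ x - φ₂ (g x)|) :
    ∀ (a : Fin n → ℝ) (x : X),
      ((∀ i, F i φ₁ x ≤ a i) → ∀ i, F i φ₂ (g x) ≤ a i + ε) ∧
      ((∀ i, F i φ₂ (g x) ≤ a i) → ∀ i, F i φ₁ x ≤ a i + ε) := by
  intro a x
  set ψ : X → ℝ := fun x => φ₂ (g x) with hψdef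
  have hψ : IsBoundedFun ψ := by
    obtain ⟨C, hC⟩ := hφ₂
    exact ⟨C, fun x => hC (g x)⟩
  have key : ∀ i, |F i φ₁ x - F i φ₂ (g x)| ≤ ε := by
    intro i
    have heq : F i ψ = fun x => F i φ₂ (g x) := hEqv i φ₂ hφ₂
    have h1 : |F i φ₁ x - F i ψ x| ≤ ⨆ y, |F i φ₁ y - F i ψ y| := by
      obtain ⟨C₁, hC₁⟩ := hBdd i φ₁ hφ₁
      obtain ⟨C₂, hC₂⟩ := hBdd i ψ hψ
      refine le_ciSup (f := fun y => |F i φ₁ y - F i ψ y|) ⟨C₁ + C₂, ?_⟩ x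
      rintro r ⟨y, rfl⟩
      calc |F i φ₁ y - F i ψ y| ≤ |F i φ₁ y| + |F i ψ y| := abs_sub _ _
        _ ≤ C₁ + C₂ := add_le_add (hC₁ y) (hC₂ y)
    have h2 := hNE i φ₁ ψ hφ₁ hψ
    rw [heq] at h1
    calc |F i φ₁ x - F i φ₂ (g x)| ≤ ⨆ y, |F i φ₁ y - F i ψ y| := by
            simpa [heq] using h1
      _ ≤ ⨆ x, |φ₁ x - ψ x| := h2
      _ = ε := hε.symm
  constructor
  · intro h i
    have := key i
    have : F i φ₂ (g x) - F i φ₁ x ≤ ε := by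
      have := neg_abs_le (F i φ₁ x - F i φ₂ (g x))
      linarith [key i, abs_le.mp (key i)]
    linarith [h i]
  · intro h i
    have := abs_le.mp (key i)
    linarith [h i]
end

section
/- Let X be a set, let φ₁, φ₂ : X → ℝ be bounded functions, let g : X → X be a bijection, and for each i = 1,…,n let F^{1,i} and F^{2,i} be operators mapping bounded real-valued functions on X to bounded real-valued functions on X, each non-expansive and equivariant with respect to g. Define Lⁱ(φ) = F^{1,i}(φ) − F^{2,i}(φ) (pointwise difference) and set ε = sup_{x∈X} |φ₁(x) − φ₂(g(x))|. Then |Lⁱ(φ₁)(x) − Lⁱ(φ₂)(g(x))| ≤ 2ε for every i and every x ∈ X; consequently, writing Γ_k = (L¹(φ_k),…,Lⁿ(φ_k)) : X → ℝⁿ, for every a ∈ ℝⁿ the map g sends S(Γ₁)_a into S(Γ₂)_{a+2ε𝟏} and g⁻¹ sends S(Γ₂)_a into S(Γ₁)_{a+2ε𝟏}; i.e., the two multi-DGENEO sublevel set filtrations are 2ε-interleaved via g. -/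
lemma le_sup_of_bounded {X : Type*} (φ ψ : X → ℝ)
    (hφ : IsBoundedFun φ) (hψ : IsBoundedFun ψ) (x : X) :
    |φ x - ψ x| ≤ ⨆ y, |φ y - ψ y| := by
  obtain ⟨C₁, h₁⟩ := hφ
  obtain ⟨C₂, h₂⟩ := hψ
  refine le_ciSup (f := fun y => |φ y - ψ y|) ⟨C₁ + C₂, ?_⟩ x
  rintro r ⟨y, rfl⟩
  calc |φ y - ψ y| ≤ |φ y| + |ψ y| := abs_sub _ _
    _ ≤ C₁ + C₂ := add_le_add (h₁ y) (h₂ y)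

/-- Two multi-DGENEO sublevel set filtrations, built from differences
`Lⁱ(φ) = F^{1,i}(φ) − F^{2,i}(φ)` of non-expansive equivariant operators,
are `2ε`-interleaved via `g`, where `ε = sup_x |φ₁ x − φ₂ (g x)|`. -/
theorem multiDGENEO_interleaved
    {X : Type*} {n : ℕ} (φ₁ φ₂ : X → ℝ)
    (hφ₁ : IsBoundedFun φ₁) (hφ₂ : IsBoundedFun φ₂)
    (g : X ≃ X)
    (F₁ F₂ : Fin n → (X → ℝ) → (X → ℝ))
    (hBdd : ∀ i (φ : X → ℝ), IsBoundedFun φ →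
      IsBoundedFun (F₁ i φ) ∧ IsBoundedFun (F₂ i φ))
    (hNE : ∀ i, NonExpansiveOp (F₁ i) ∧ NonExpansiveOp (F₂ i))
    (hEqv : ∀ i, EquivariantOp (F₁ i) g ∧ EquivariantOp (F₂ i) g)
    (L : Fin n → (X → ℝ) → (X → ℝ))
    (hL : ∀ i (φ : X → ℝ) (x : X), L i φ x = F₁ i φ x - F₂ i φ x)
    (ε : ℝ) (hε : ε = ⨆ x, |φ₁ x - φ₂ (g x)|) :
    (∀ (i : Fin n) (x : X), |L i φ₁ x - L i φ₂ (g x)| ≤ 2 * ε) ∧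
    ∀ (a : Fin n → ℝ) (x : X),
      ((∀ i, L i φ₁ x ≤ a i) → ∀ i, L i φ₂ (g x) ≤ a i + 2 * ε) ∧
      ((∀ i, L i φ₂ (g x) ≤ a i) → ∀ i, L i φ₁ x ≤ a i + 2 * ε) := by
  have hφ₂g : IsBoundedFun (fun x => φ₂ (g x)) := by
    obtain ⟨C, hC⟩ := hφ₂; exact ⟨C, fun x => hC (g x)⟩
  have key : ∀ (F : (X → ℝ) → (X → ℝ)),
      (∀ φ : X → ℝ, IsBoundedFun φ → IsBoundedFun (F φ)) →
      NonExpansiveOp F → EquivariantOp F g →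
      ∀ x, |F φ₁ x - F φ₂ (g x)| ≤ ε := by
    intro F hB hN hE x
    have h1 : |F φ₁ x - F (fun y => φ₂ (g y)) x| ≤ ⨆ y, |F φ₁ y - F (fun y => φ₂ (g y)) y| :=
      le_sup_of_bounded _ _ (hB _ hφ₁) (hB _ hφ₂g) x
    have h2 := hN φ₁ (fun y => φ₂ (g y)) hφ₁ hφ₂g
    have h3 : F (fun y => φ₂ (g y)) x = F φ₂ (g x) := by rw [hE φ₂ hφ₂]
    rw [h3] at h1
    calc |F φ₁ x - F φ₂ (g x)| ≤ _ := h1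
      _ ≤ ⨆ y, |φ₁ y - φ₂ (g y)| := h2
      _ = ε := hε.symm
  have main : ∀ (i : Fin n) (x : X), |L i φ₁ x - L i φ₂ (g x)| ≤ 2 * ε := by
    intro i x
    have k1 := key (F₁ i) (fun φ hφ => (hBdd i φ hφ).1) (hNE i).1 (hEqv i).1 x
    have k2 := key (F₂ i) (fun φ hφ => (hBdd i φ hφ).2) (hNE i).2 (hEqv i).2 x
    rw [hL, hL]
    calc |F₁ i φ₁ x - F₂ i φ₁ x - (F₁ i φ₂ (g x) - F₂ i φ₂ (g x))|
        = |(F₁ i φ₁ x - F₁ i φ₂ (g x)) - (F₂ i φ₁ x - F₂ i φ₂ (g x))| := by ring_nf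
      _ ≤ |F₁ i φ₁ x - F₁ i φ₂ (g x)| + |F₂ i φ₁ x - F₂ i φ₂ (g x)| := abs_sub _ _
      _ ≤ ε + ε := add_le_add k1 k2
      _ = 2 * ε := by ring
  refine ⟨main, fun a x => ⟨fun h i => ?_, fun h i => ?_⟩⟩
  · have := (abs_le.mp (main i x)).1
    linarith [h i]
  · have := (abs_le.mp (main i x)).2
    linarith [h i]
end

section
/- Let X be a set, let φ₁, φ₂ : X → ℝ be bounded functions, let g : X → X be a bijection, and for each i = 1,…,n let Mⁱ be an operator on bounded real-valued functions on X which is either (i) non-expansive and equivariant with respect to g, or (ii) the pointwise difference F^{1,i} − F^{2,i} of two operators that are each non-expansive and equivariant with respect to g. Set ε = sup_{x∈X} |φ₁(x) − φ₂(g(x))|. Then |Mⁱ(φ₁)(x) − Mⁱ(φ₂)(g(x))| ≤ 2ε for every i and every x ∈ X; consequently, writing Γ_k = (M¹(φ_k),…,Mⁿ(φ_k)) : X → ℝⁿ, for every a ∈ ℝⁿ the map g sends S(Γ₁)_a into S(Γ₂)_{a+2ε𝟏} and g⁻¹ sends S(Γ₂)_a into S(Γ₁)_{a+2ε𝟏};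 i.e., the two mix-GENEO sublevel set filtrations are 2ε-interleaved via g. -/
lemma mixGENEO_key {X : Type*} (φ₁ φ₂ : X → ℝ)
    (hφ₁ : IsBoundedFun φ₁) (hφ₂ : IsBoundedFun φ₂) (g : X ≃ X)
    (F : (X → ℝ) → (X → ℝ)) (hne : NonExpansiveOp F) (heq : EquivariantOp F g)
    (hb1 : IsBoundedFun (F φ₁)) (hb2 : IsBoundedFun (F φ₂)) (x : X) :
    |F φ₁ x - F φ₂ (g x)| ≤ ⨆ x, |φ₁ x - φ₂ (g x)| := by
  obtain ⟨C, hC⟩ := hφ₂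
  have hcomp : IsBoundedFun (fun x => φ₂ (g x)) := ⟨C, fun x => hC (g x)⟩
  have heqv := heq φ₂ ⟨C, hC⟩
  have h := hne φ₁ (fun x => φ₂ (g x)) hφ₁ hcomp
  rw [heqv] at h
  refine le_trans (le_trans ?_ (le_ciSup ?_ x)) h
  · exact le_refl _
  · obtain ⟨C₁, hC₁⟩ := hb1
    obtain ⟨C₂, hC₂⟩ := hb2
    refine ⟨C₁ + C₂, ?_⟩
    rintro r ⟨y, rfl⟩
    calc |F φ₁ y - F φ₂ (g y)| ≤ |F φ₁ y| + |F φ₂ (g y)| := abs_sub _ _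
    _ ≤ C₁ + C₂ := add_le_add (hC₁ y) (hC₂ (g y))

/-- Two mix-GENEO sublevel set filtrations, built from operators `Mⁱ` each of which
is either non-expansive and equivariant, or a difference of two non-expansive
equivariant operators, are `2ε`-interleaved via `g`, where
`ε = sup_x |φ₁ x − φ₂ (g x)|`. -/
theorem mixGENEO_interleaved
    {X : Type*} {n : ℕ} (φ₁ φ₂ : X → ℝ)
    (hφ₁ : IsBoundedFun φ₁) (hφ₂ : IsBoundedFun φ₂)
    (g : X ≃ X)
    (M : Fin n → (X → ℝ) → (X → ℝ))
    (hM : ∀ i,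
      (NonExpansiveOp (M i) ∧ EquivariantOp (M i) g) ∨
      (∃ F₁ F₂ : (X → ℝ) → (X → ℝ),
        NonExpansiveOp F₁ ∧ EquivariantOp F₁ g ∧
        NonExpansiveOp F₂ ∧ EquivariantOp F₂ g ∧
        (∀ (φ : X → ℝ), IsBoundedFun φ → IsBoundedFun (F₁ φ) ∧ IsBoundedFun (F₂ φ)) ∧
        ∀ (φ : X → ℝ) (x : X), M i φ x = F₁ φ x - F₂ φ x))
    (hBdd : ∀ i (φ : X → ℝ), IsBoundedFun φ → IsBoundedFun (M i φ))
    (ε : ℝ) (hε : ε = ⨆ x, |φ₁ x - φ₂ (g x)|) :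
    (∀ (i : Fin n) (x : X), |M i φ₁ x - M i φ₂ (g x)| ≤ 2 * ε) ∧
    ∀ (a : Fin n → ℝ) (x : X),
      ((∀ i, M i φ₁ x ≤ a i) → ∀ i, M i φ₂ (g x) ≤ a i + 2 * ε) ∧
      ((∀ i, M i φ₂ (g x) ≤ a i) → ∀ i, M i φ₁ x ≤ a i + 2 * ε) := by
  have hε0 : 0 ≤ ε := by
    rw [hε]; exact Real.iSup_nonneg (fun x => abs_nonneg _)
  have hmain : ∀ (i : Fin n) (x : X), |M i φ₁ x - M i φ₂ (g x)| ≤ 2 * ε := by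
    intro i x
    rcases hM i with ⟨hne, heq⟩ | ⟨F₁, F₂, hne₁, heq₁, hne₂, heq₂, hb, hdiff⟩
    · calc |M i φ₁ x - M i φ₂ (g x)| ≤ ε := by
            rw [hε]
            exact mixGENEO_key φ₁ φ₂ hφ₁ hφ₂ g (M i) hne heq
              (hBdd i φ₁ hφ₁) (hBdd i φ₂ hφ₂) x
      _ ≤ 2 * ε := by linarith
    · have h1 := mixGENEO_key φ₁ φ₂ hφ₁ hφ₂ g F₁ hne₁ heq₁
        (hb φ₁ hφ₁).1 (hb φ₂ hφ₂).1 x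
      have h2 := mixGENEO_key φ₁ φ₂ hφ₁ hφ₂ g F₂ hne₂ heq₂
        (hb φ₁ hφ₁).2 (hb φ₂ hφ₂).2 x
      rw [← hε] at h1 h2
      rw [hdiff φ₁ x, hdiff φ₂ (g x)]
      have := abs_sub_abs_le_abs_sub (F₁ φ₁ x - F₁ φ₂ (g x)) (F₂ φ₁ x - F₂ φ₂ (g x))
      calc |F₁ φ₁ x - F₂ φ₁ x - (F₁ φ₂ (g x) - F₂ φ₂ (g x))|
          = |(F₁ φ₁ x - F₁ φ₂ (g x)) - (F₂ φ₁ x - F₂ φ₂ (g x))| := by ring_nf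
        _ ≤ |F₁ φ₁ x - F₁ φ₂ (g x)| + |F₂ φ₁ x - F₂ φ₂ (g x)| := abs_sub _ _
        _ ≤ 2 * ε := by linarith
  refine ⟨hmain, fun a x => ⟨fun h i => ?_, fun h i => ?_⟩⟩
  · have := hmain i x
    have := h i
    have := abs_le.mp (hmain i x)
    linarith [this.1, this.2]
  · have := abs_le.mp (hmain i x)
    have := h i
    linarith [(abs_le.mp (hmain i x)).1, (abs_le.mp (hmain i x)).2]
end

section
/- Let G : ℝ² → ℝ be Lebesgue integrable with ‖G‖_{L¹} ≠ 0, and assume G is radial, i.e. G(u) = G(v) whenever ‖u‖ = ‖v‖ (Euclidean norm). Then the normalized convolution operator F_G is equivariant under the full group of Euclidean plane isometries: for every surjective isometry g : ℝ² → ℝ² and every bounded measurable φ : ℝ² → ℝ, F_G(φ ∘ g)(x) = F_G(φ)(g(x)) for every x ∈ ℝ². (Together with non-expansiveness, this says F_G is a group equivariant non-expansive operator with respect to the group of Euclidean plane isometries.) -/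
open MeasureTheory Function

/-- The Euclidean plane `ℝ²` with Lebesgue measure. -/
noncomputable abbrev Plane : Type := EuclideanSpace ℝ (Fin 2)

/-- The normalized convolution operator associated with an integrable kernel `G`:
`F_G(φ)(x) = (1/‖G‖_{L¹}) ∫ φ(y) G(x − y) dy`. -/
noncomputable def normConv (G : Plane → ℝ) (φ : Plane → ℝ) (x : Plane) : ℝ :=
  (1 / ∫ y, |G y|) * ∫ y, φ y * G (x - y)

/-- If the kernel `G` is radial, the normalized convolution operator `F_G` is
equivariant under every surjective isometry of the Euclidean plane:
`F_G(φ ∘ g)(x) = F_G(φ)(g x)`. -/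
theorem normConv_isometry_equivariant
    (G : Plane → ℝ) (hG : Integrable G) (hG0 : (∫ y, |G y|) ≠ 0)
    (hGrad : ∀ u v : Plane, ‖u‖ = ‖v‖ → G u = G v)
    (g : Plane → Plane) (hg : Isometry g) (hgs : Surjective g)
    (φ : Plane → ℝ) (hφm : Measurable φ) (hφb : IsBoundedFun φ) :
    ∀ x : Plane, normConv G (fun y => φ (g y)) x = normConv G φ (g x) := by
  intro x
  -- upgrade `g` to an isometry equivalence
  set e : Plane ≃ᵢ Plane :=
    { toEquiv := Equiv.ofBijective g ⟨hg.injective, hgs⟩, isometry_toFun := hg } with he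
  have hecoe : ⇑e = g := rfl
  -- `e` is measure preserving
  have hL : MeasurePreserving (e.toRealLinearIsometryEquiv) :=
    LinearIsometryEquiv.measurePreserving _
  have hmp : MeasurePreserving e (volume : Measure Plane) volume := by
    have h1 : MeasurePreserving (fun z : Plane => z + e 0) volume volume :=
      measurePreserving_add_right volume (e 0)
    have : ⇑e = (fun z : Plane => z + e 0) ∘ ⇑e.toRealLinearIsometryEquiv := by
      funext y
      simp [IsometryEquiv.toRealLinearIsometryEquiv_apply]
    rw [this]
    exact h1.comp hL
  have key : ∫ y, φ (g y) * G (x - y) = ∫ z, φ z * G (g x - z) := by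
    have := hmp.integral_comp (e.toHomeomorph.toMeasurableEquiv.measurableEmbedding)
      (fun z => φ z * G (g x - z))
    rw [← this]
    congr 1
    funext y
    have : G (g x - g y) = G (x - y) := by
      apply hGrad
      have := hg.dist_eq x y
      rwa [dist_eq_norm, dist_eq_norm] at this
    simp [hecoe, this]
  unfold normConv
  rw [key]
end

section
/- Let G¹,…,Gⁿ : ℝ² → ℝ be Lebesgue integrable radial kernels with ‖Gⁱ‖_{L¹} ≠ 0 for each i, and let F_{Gⁱ} denote the associated normalized convolution operators. Let φ₁, φ₂ : ℝ² → ℝ be bounded measurable functions, let g : ℝ² → ℝ² be a surjective isometry, and set ε = sup_{x∈ℝ²} |φ₁(x) − φ₂(g(x))|. Then for every a ∈ ℝⁿ and every x ∈ ℝ²: if F_{Gⁱ}(φ₁)(x) ≤ a_i for all i, then F_{Gⁱ}(φ₂)(g(x)) ≤ a_i + ε for all i; and if F_{Gⁱ}(φ₂)(g(x)) ≤ a_i for all i, then F_{Gⁱ}(φ₁)(x) ≤ a_i + ε for all i. That is, the multi-GENEO sublevel set filtrations of (F_{G¹}(φ₁),…,F_{Gⁿ}(φ₁)) and (F_{G¹}(φ₂),…,F_{Gⁿ}(φ₂))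 are ε-interleaved via g, with ε = sup_x |φ₁(x) − (φ₂∘g)(x)|; in particular, taking g to be the identity, they are D(φ₁,φ₂)-interleaved where D is the sup pseudometric. -/
open MeasureTheory Function

/-!
Since `‖G‖_{L¹}` normalizes the kernel, `F_G` is `1`-Lipschitz for the sup distance:
`|F_G φ - F_G ψ| ≤ ‖G‖_{L¹}⁻¹ ∫ |φ - ψ| |G(x - ·)| ≤ sup |φ - ψ|`.
A surjective isometry `g` preserves Lebesgue measure and, `G` being radial,
`G (g x - g y) = G (x - y)`; substituting `y ↦ g y` gives `F_G(φ)(g x) = F_G(φ ∘ g)(x)`.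
Applying the Lipschitz bound to `φ₁` and `φ₂ ∘ g` yields both halves of the interleaving.
-/

lemma abs_integral_mul_le_of_abs_le {α : Type*} [MeasurableSpace α] {μ : Measure α}
    {f k : α → ℝ} {ε : ℝ} (hk : Integrable k μ) (hf : ∀ y, |f y| ≤ ε) :
    |∫ y, f y * k y ∂μ| ≤ ε * ∫ y, |k y| ∂μ := by
  rw [← integral_const_mul]
  refine norm_integral_le_of_norm_le (f := fun y => f y * k y) (hk.abs.const_mul ε)
    (ae_of_all _ fun y => ?_)
  rw [Real.norm_eq_abs, abs_mul]
  exact mul_le_mul_of_nonneg_right (hf y) (abs_nonneg _)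

section Isometry

variable {E : Type*} [NormedAddCommGroup E] [InnerProductSpace ℝ E] [FiniteDimensional ℝ E]
  [MeasurableSpace E] [BorelSpace E]

/-- Mazur–Ulam: `e` is a linear isometry followed by the translation by `e 0`. -/
theorem IsometryEquiv.measurePreserving_volume (e : E ≃ᵢ E) : MeasurePreserving e := by
  have he : ⇑e = fun x => e.toRealLinearIsometryEquiv x + e 0 := by
    funext x
    rw [e.toRealLinearIsometryEquiv_apply, sub_add_cancel]
  rw [he]
  exact (measurePreserving_add_right volume (e 0)).comp
    e.toRealLinearIsometryEquiv.measurePreserving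

lemma integral_mul_comp_sub_isometryEquiv {G : E → ℝ}
    (hG : ∀ u v : E, ‖u‖ = ‖v‖ → G u = G v) (e : E ≃ᵢ E) (φ : E → ℝ) (x : E) :
    ∫ y, φ y * G (e x - y) = ∫ y, φ (e y) * G (x - y) := by
  rw [← e.measurePreserving_volume.integral_comp e.toHomeomorph.measurableEmbedding]
  congr 1 with y
  rw [hG (e x - e y) (x - y) (by rw [← dist_eq_norm, ← dist_eq_norm, e.dist_eq])]

end Isometry

lemma normConv_comp_isometryEquiv {G : Plane → ℝ}
    (hG : ∀ u v : Plane, ‖u‖ = ‖v‖ → G u = G v) (e : Plane ≃ᵢ Plane) (φ : Plane → ℝ)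
    (x : Plane) : normConv G φ (e x) = normConv G (φ ∘ e) x := by
  rw [normConv, normConv, integral_mul_comp_sub_isometryEquiv hG]
  rfl

lemma IsBoundedFun.comp {X Y : Type*} {φ : Y → ℝ} (hφ : IsBoundedFun φ) (f : X → Y) :
    IsBoundedFun (φ ∘ f) :=
  let ⟨C, hC⟩ := hφ
  ⟨C, fun x => hC (f x)⟩

lemma IsBoundedFun.bddAbove_range_abs_sub {X : Type*} {φ ψ : X → ℝ} (hφ : IsBoundedFun φ)
    (hψ : IsBoundedFun ψ) : BddAbove (Set.range fun x => |φ x - ψ x|) := by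
  obtain ⟨C, hC⟩ := hφ
  obtain ⟨D, hD⟩ := hψ
  refine ⟨C + D, ?_⟩
  rintro _ ⟨x, rfl⟩
  exact (abs_sub _ _).trans (add_le_add (hC x) (hD x))

lemma IsBoundedFun.integrable_mul_comp_sub {G φ : Plane → ℝ} (hG : Integrable G)
    (hφm : AEStronglyMeasurable φ) (hφb : IsBoundedFun φ) (x : Plane) :
    Integrable fun y => φ y * G (x - y) := by
  obtain ⟨C, hC⟩ := hφb
  exact (hG.comp_sub_left x).bdd_mul hφm (c := C) (ae_of_all _ hC)

lemma normConv_le_normConv_add {G φ ψ : Plane → ℝ} (hG : Integrable G)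
    (hφm : AEStronglyMeasurable φ) (hψm : AEStronglyMeasurable ψ)
    (hφb : IsBoundedFun φ) (hψb : IsBoundedFun ψ) {ε : ℝ} (hd : ∀ y, |φ y - ψ y| ≤ ε)
    (x : Plane) : normConv G φ x ≤ normConv G ψ x + ε := by
  set I := ∫ y, |G y|
  have hI : 0 ≤ I := integral_nonneg fun y => abs_nonneg _
  have hε : 0 ≤ ε := (abs_nonneg _).trans (hd 0)
  have hdiff : normConv G φ x - normConv G ψ x = 1 / I * ∫ y, (φ y - ψ y) * G (x - y) := by
    simp only [normConv, sub_mul]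
    rw [integral_sub (hφb.integrable_mul_comp_sub hG hφm x) (hψb.integrable_mul_comp_sub hG hψm x),
      mul_sub]
  have habs : |∫ y, (φ y - ψ y) * G (x - y)| ≤ ε * I := by
    have h := abs_integral_mul_le_of_abs_le (hG.comp_sub_left x) hd
    rwa [integral_sub_left_eq_self (fun y => |G y|) volume x] at h
  -- `I = 0` is not excluded; then `1 / I = 0`.
  have hnorm : 1 / I * (ε * I) ≤ ε := by
    rcases hI.eq_or_lt with hI0 | hIpos
    · simp [← hI0, hε]
    · rw [one_div, mul_comm ε, inv_mul_cancel_left₀ hIpos.ne']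
  have := mul_le_mul_of_nonneg_left ((le_abs_self _).trans habs) (one_div_nonneg.mpr hI)
  linarith

theorem multiGENEO_convolution_interleaved_general
    {n : ℕ} (G : Fin n → Plane → ℝ)
    (hG : ∀ i, Integrable (G i))
    (hGrad : ∀ i, ∀ u v : Plane, ‖u‖ = ‖v‖ → G i u = G i v)
    (φ₁ φ₂ : Plane → ℝ)
    (hφ₁m : Measurable φ₁) (hφ₂m : Measurable φ₂)
    (hφ₁b : IsBoundedFun φ₁) (hφ₂b : IsBoundedFun φ₂)
    (g : Plane → Plane) (hg : Isometry g) (hgs : Surjective g)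
    (ε : ℝ) (hε : ε = ⨆ x, |φ₁ x - φ₂ (g x)|) :
    ∀ (a : Fin n → ℝ) (x : Plane),
      ((∀ i, normConv (G i) φ₁ x ≤ a i) →
        ∀ i, normConv (G i) φ₂ (g x) ≤ a i + ε) ∧
      ((∀ i, normConv (G i) φ₂ (g x) ≤ a i) →
        ∀ i, normConv (G i) φ₁ x ≤ a i + ε) := by
  let e : Plane ≃ᵢ Plane := ⟨Equiv.ofBijective g ⟨hg.injective, hgs⟩, hg⟩
  have hd : ∀ y, |φ₁ y - (φ₂ ∘ e) y| ≤ ε :=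
    fun y => hε ▸ le_ciSup (hφ₁b.bddAbove_range_abs_sub (hφ₂b.comp g)) y
  have hφ₂e : AEStronglyMeasurable (φ₂ ∘ e) :=
    (hφ₂m.comp hg.continuous.measurable).aestronglyMeasurable
  have h₁₂ (i : Fin n) (x : Plane) : normConv (G i) φ₂ (e x) ≤ normConv (G i) φ₁ x + ε := by
    rw [normConv_comp_isometryEquiv (hGrad i)]
    exact normConv_le_normConv_add (hG i) hφ₂e hφ₁m.aestronglyMeasurable (hφ₂b.comp g) hφ₁b
      (fun y => abs_sub_comm (φ₁ y) _ ▸ hd y) x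
  have h₂₁ (i : Fin n) (x : Plane) : normConv (G i) φ₁ x ≤ normConv (G i) φ₂ (e x) + ε := by
    rw [normConv_comp_isometryEquiv (hGrad i)]
    exact normConv_le_normConv_add (hG i) hφ₁m.aestronglyMeasurable hφ₂e hφ₁b (hφ₂b.comp g) hd x
  exact fun a x => ⟨fun h i => (h₁₂ i x).trans (add_le_add_left (h i) ε),
    fun h i => (h₂₁ i x).trans (add_le_add_left (h i) ε)⟩

/-- The multi-GENEO sublevel set filtrations built from normalized convolution with
radial integrable kernels are `ε`-interleaved via any surjective isometry `g` of the
Euclidean plane, where `ε = sup_x |φ₁ x − φ₂ (g x)|`. -/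
theorem multiGENEO_convolution_interleaved
    {n : ℕ} (G : Fin n → Plane → ℝ)
    (hG : ∀ i, Integrable (G i)) (hG0 : ∀ i, (∫ y, |G i y|) ≠ 0)
    (hGrad : ∀ i, ∀ u v : Plane, ‖u‖ = ‖v‖ → G i u = G i v)
    (φ₁ φ₂ : Plane → ℝ)
    (hφ₁m : Measurable φ₁) (hφ₂m : Measurable φ₂)
    (hφ₁b : IsBoundedFun φ₁) (hφ₂b : IsBoundedFun φ₂)
    (g : Plane → Plane) (hg : Isometry g) (hgs : Surjective g)
    (ε : ℝ) (hε : ε = ⨆ x, |φ₁ x - φ₂ (g x)|) :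
    ∀ (a : Fin n → ℝ) (x : Plane),
      ((∀ i, normConv (G i) φ₁ x ≤ a i) →
        ∀ i, normConv (G i) φ₂ (g x) ≤ a i + ε) ∧
      ((∀ i, normConv (G i) φ₂ (g x) ≤ a i) →
        ∀ i, normConv (G i) φ₁ x ≤ a i + ε) :=
  multiGENEO_convolution_interleaved_general G hG hGrad φ₁ φ₂ hφ₁m hφ₂m hφ₁b hφ₂b g hg hgs ε hε
end
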